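/- The relative entropy between two Poisson states in the Poisson limit is D(Γ‖Γ'): with ρ_M = ((1−N/M)τ₀ ⊕ (N/M)τ₁)^{⊗M} and ρ'_M defined analogously with N', τ₁', and assuming supp τ₁ ⊆ supp τ₁', lim_{M→∞} D(ρ_M‖ρ'_M) = N' − N + tr Γ(ln Γ − ln Γ') where Γ = Nτ₁, Γ' = N'τ₁'. -/

import Mathlib

open Matrix Kronecker ComplexOrder Filter

open Classical in
/-- Logarithm of a positive semidefinite matrix taken on its support (via the functional
calculus, with the convention `ln 0 = 0` on the kernel; junk value `0` for non-PSD input). -/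
noncomputable def matLog {n : Type*} [Fintype n] [DecidableEq n]
    (A : Matrix n n ℂ) : Matrix n n ℂ :=
  if h : A.PosSemidef then
    (h.1.eigenvectorUnitary : Matrix n n ℂ) *
      Matrix.diagonal (fun i =>
        ((if h.1.eigenvalues i = 0 then 0 else Real.log (h.1.eigenvalues i) : ℝ) : ℂ)) *
      (star h.1.eigenvectorUnitary : Matrix n n ℂ)
  else 0

/-- The quantity `tr A (ln A − ln B)`, the quantum relative entropy of operators of
equal trace (logarithms taken on the supports). -/
noncomputable def qRelEnt {n : Type*} [Fintype n] [DecidableEq n]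
    (A B : Matrix n n ℂ) : ℝ :=
  ((A * (matLog A - matLog B)).trace).re

/-- `M`-fold tensor power of a matrix, realized on the index set `Fin M → k`. -/
noncomputable def tpow {k : Type*} (τ : Matrix k k ℂ) (M : ℕ) :
    Matrix (Fin M → k) (Fin M → k) ℂ :=
  Matrix.of fun i j => ∏ m, τ (i m) (j m)

/-- The single-temporal-mode rare state `(1 − N/M) τ₀ ⊕ (N/M) τ₁`, where `τ₀` is the
unique density operator on a 1-dimensional space. -/
noncomputable def rareState {d : ℕ} (N : ℝ) (τ₁ : Matrix (Fin d) (Fin d) ℂ) (M : ℕ) :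
    Matrix (Unit ⊕ Fin d) (Unit ⊕ Fin d) ℂ :=
  Matrix.fromBlocks (((1 - N / M : ℝ) : ℂ) • 1) 0 0 (((N / M : ℝ) : ℂ) • τ₁)


section Aux
open Matrix Polynomial

noncomputable def flog (x : ℝ) : ℝ := if x = 0 then 0 else Real.log x

lemma uconj_pow {n : Type*} [Fintype n] [DecidableEq n] (W M : Matrix n n ℂ)
    (h1 : W * star W = 1) (h2 : star W * W = 1) (k : ℕ) :
    (W * M * star W) ^ k = W * M ^ k * star W := by
  induction k with
  | zero => simp [h1]
  | succ k ih =>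
      rw [pow_succ, ih, pow_succ]
      calc W * M ^ k * star W * (W * M * star W)
          = W * M ^ k * (star W * W) * (M * star W) := by
            simp only [Matrix.mul_assoc]
        _ = W * (M ^ k * M) * star W := by rw [h2]; simp only [Matrix.mul_assoc, Matrix.one_mul]

lemma aeval_unitary_conj {n : Type*} [Fintype n] [DecidableEq n] (W M : Matrix n n ℂ)
    (h1 : W * star W = 1) (h2 : star W * W = 1) (q : ℂ[X]) :
    Polynomial.aeval (W * M * star W) q = W * Polynomial.aeval M q * star W := by
  induction q using Polynomial.induction_on' with
  | add p q hp hq => rw [map_add, map_add, hp, hq, Matrix.mul_add, Matrix.add_mul]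
  | monomial k a =>
      rw [Polynomial.aeval_monomial, Polynomial.aeval_monomial, uconj_pow W M h1 h2,
        Algebra.algebraMap_eq_smul_one]
      simp [smul_mul_assoc, mul_smul_comm]

lemma aeval_diagonal {n : Type*} [Fintype n] [DecidableEq n] (v : n → ℂ) (q : ℂ[X]) :
    Polynomial.aeval (Matrix.diagonal v) q = Matrix.diagonal (fun i => q.eval (v i)) := by
  induction q using Polynomial.induction_on' with
  | add p q hp hq =>
      rw [map_add, hp, hq, diagonal_add]
      simp [Polynomial.eval_add]
  | monomial k a =>
      rw [Polynomial.aeval_monomial, diagonal_pow, Algebra.algebraMap_eq_smul_one,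
        smul_mul_assoc, one_mul]
      ext i j
      by_cases h : i = j <;> simp [h, Polynomial.eval_monomial, Matrix.diagonal_apply]

lemma unit_mul_star {n : Type*} [Fintype n] [DecidableEq n] {V : Matrix n n ℂ}
    (hV : V ∈ Matrix.unitaryGroup n ℂ) : V * star V = 1 := (Matrix.mem_unitaryGroup_iff.mp hV)

lemma unit_star_mul {n : Type*} [Fintype n] [DecidableEq n] {V : Matrix n n ℂ}
    (hV : V ∈ Matrix.unitaryGroup n ℂ) : star V * V = 1 := (Matrix.mem_unitaryGroup_iff'.mp hV)

lemma posSemidef_of_decomp {n : Type*} [Fintype n] [DecidableEq n]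
    {A V : Matrix n n ℂ} (hV : V ∈ Matrix.unitaryGroup n ℂ) {ν : n → ℝ} (hν : ∀ i, 0 ≤ ν i)
    (hA : A = V * Matrix.diagonal (fun i => (ν i : ℂ)) * star V) : A.PosSemidef := by
  have hd : (Matrix.diagonal (fun i => (ν i : ℂ))).PosSemidef := by
    rw [Matrix.posSemidef_diagonal_iff]
    intro i
    exact_mod_cast hν i
  rw [hA]
  simpa [Matrix.star_eq_conjTranspose] using hd.mul_mul_conjTranspose_same V

lemma matLog_eq {n : Type*} [Fintype n] [DecidableEq n]
    {A V : Matrix n n ℂ} (h : A.PosSemidef) (hV : V ∈ Matrix.unitaryGroup n ℂ) (ν : n → ℝ)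
    (hA : A = V * Matrix.diagonal (fun i => (ν i : ℂ)) * star V) :
    matLog A = V * Matrix.diagonal (fun i => (flog (ν i) : ℂ)) * star V := by
  classical
  set U : Matrix n n ℂ := (h.1.eigenvectorUnitary : Matrix n n ℂ) with hU
  have hUmem : U ∈ Matrix.unitaryGroup n ℂ := h.1.eigenvectorUnitary.prop
  set lam : n → ℝ := h.1.eigenvalues with hlam
  -- interpolation polynomial
  set S : Finset ℝ := (Finset.univ.image lam) ∪ (Finset.univ.image ν) with hS
  set p : ℝ[X] := Lagrange.interpolate S id flog with hp
  have hpe : ∀ x ∈ S, p.eval x = flog x := fun x hx =>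
    Lagrange.eval_interpolate_at_node flog (Set.injOn_id _) hx
  set q : ℂ[X] := p.map (algebraMap ℝ ℂ) with hq
  have hqe : ∀ x ∈ S, q.eval (x : ℂ) = ((flog x : ℝ) : ℂ) := by
    intro x hx
    rw [hq, Polynomial.eval_map]
    have : ((x : ℝ) : ℂ) = algebraMap ℝ ℂ x := rfl
    rw [this, Polynomial.eval₂_hom, hpe x hx]
    rfl
  have key : ∀ (W : Matrix n n ℂ), W ∈ Matrix.unitaryGroup n ℂ → ∀ (w : n → ℝ),
      (∀ i, w i ∈ S) → A = W * Matrix.diagonal (fun i => (w i : ℂ)) * star W →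
      Polynomial.aeval A q = W * Matrix.diagonal (fun i => ((flog (w i) : ℝ) : ℂ)) * star W := by
    intro W hW w hw hAW
    rw [hAW, aeval_unitary_conj W _ (unit_mul_star hW) (unit_star_mul hW), aeval_diagonal]
    have hd : (fun i => q.eval ((w i : ℝ) : ℂ)) = fun i => ((flog (w i) : ℝ) : ℂ) :=
      funext fun i => hqe (w i) (hw i)
    rw [hd]
  have hspec : A = U * Matrix.diagonal (fun i => ((lam i : ℝ) : ℂ)) * star U := by
    simpa [Function.comp_def] using h.1.spectral_theorem
  have e1 := key U hUmem lam
    (fun i => Finset.mem_union_left _ (Finset.mem_image_of_mem _ (Finset.mem_univ i))) hspec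
  have e2 := key V hV ν
    (fun i => Finset.mem_union_right _ (Finset.mem_image_of_mem _ (Finset.mem_univ i))) hA
  have hm : matLog A = U * Matrix.diagonal (fun i => ((flog (lam i) : ℝ) : ℂ)) * star U := by
    have hfun : (fun i => (((if h.1.eigenvalues i = 0 then (0:ℝ)
        else Real.log (h.1.eigenvalues i)) : ℝ) : ℂ))
        = fun i => ((flog (lam i) : ℝ) : ℂ) := by
      funext i
      by_cases hz : h.1.eigenvalues i = 0 <;> simp [flog, hlam, hz]
    rw [matLog, dif_pos h, hfun]
  rw [hm, e1.symm, e2]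

end Aux

section Aux2
open Matrix


variable {k : Type*} [Fintype k] [DecidableEq k]

lemma tpow_mul (A B : Matrix k k ℂ) (M : ℕ) :
    tpow (A * B) M = tpow A M * tpow B M := by
  ext i j
  simp only [tpow, Matrix.of_apply, Matrix.mul_apply, ← Finset.prod_mul_distrib,
    ← Fintype.piFinset_univ]
  exact Finset.prod_univ_sum _ _

lemma tpow_one (M : ℕ) : tpow (1 : Matrix k k ℂ) M = 1 := by
  ext i j
  simp only [tpow, Matrix.of_apply, Matrix.one_apply, Finset.prod_boole]
  by_cases h : i = j
  · simp [h]
  · have : ¬ ∀ m, i m = j m := by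
      intro hc; exact h (funext hc)
    simp [h, this]

lemma tpow_conjTranspose (A : Matrix k k ℂ) (M : ℕ) :
    tpow Aᴴ M = (tpow A M)ᴴ := by
  ext i j
  simp [tpow, Matrix.conjTranspose_apply]

lemma tpow_diagonal (v : k → ℂ) (M : ℕ) :
    tpow (Matrix.diagonal v) M = Matrix.diagonal (fun i => ∏ m, v (i m)) := by
  ext i j
  by_cases h : i = j
  · subst h
    simp [tpow, Matrix.diagonal_apply_eq]
  · obtain ⟨m, hm⟩ : ∃ m, i m ≠ j m := by
      by_contra hc
      push_neg at hc
      exact h (funext hc)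
    rw [Matrix.diagonal_apply_ne _ h]
    exact Finset.prod_eq_zero (Finset.mem_univ m) (by simp [Matrix.diagonal_apply_ne _ hm])

lemma tpow_unitary {W : Matrix k k ℂ} (hW : W ∈ Matrix.unitaryGroup k ℂ) (M : ℕ) :
    tpow W M ∈ Matrix.unitaryGroup (Fin M → k) ℂ := by
  rw [Matrix.mem_unitaryGroup_iff]
  rw [Matrix.star_eq_conjTranspose, ← tpow_conjTranspose, ← tpow_mul, ← Matrix.star_eq_conjTranspose,
    Matrix.mem_unitaryGroup_iff.mp hW, tpow_one]


lemma flog_of_ne {x : ℝ} (h : x ≠ 0) : flog x = Real.log x := if_neg h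

lemma trace_mul_diag {n : Type*} [Fintype n] [DecidableEq n] (A : Matrix n n ℂ) (g : n → ℂ) :
    (A * Matrix.diagonal g).trace = ∑ i, A i i * g i := by
  simp [Matrix.trace, Matrix.diag, Matrix.mul_diagonal]

lemma trace_tpow_mul_log {n : Type*} [Fintype n] [DecidableEq n]
    (ρ W : Matrix n n ℂ) (hW : W ∈ Matrix.unitaryGroup n ℂ) (ν : n → ℝ)
    (hρtr : ρ.trace = 1)
    (hzero : ∀ x, ν x = 0 → (star W * ρ * W) x x = 0) (M : ℕ) :
    (tpow ρ M * (tpow W M * Matrix.diagonal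
        (fun i : Fin M → n => ((flog (∏ m, ν (i m)) : ℝ) : ℂ)) * star (tpow W M))).trace
      = M * ∑ x, ((flog (ν x) : ℝ) : ℂ) * (star W * ρ * W) x x := by
  classical
  set σ := star W * ρ * W with hσ
  set D := Matrix.diagonal (fun i : Fin M → n => ((flog (∏ m, ν (i m)) : ℝ) : ℂ)) with hD
  have hσtr : ∑ x, σ x x = 1 := by
    have h1 : σ.trace = (W * star W * ρ).trace := Matrix.trace_mul_cycle (star W) ρ W
    rw [Matrix.mem_unitaryGroup_iff.mp hW, Matrix.one_mul, hρtr] at h1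
    simpa [Matrix.trace, Matrix.diag] using h1
  have e1 : (tpow ρ M * (tpow W M * D * star (tpow W M))).trace
      = ((star (tpow W M) * tpow ρ M * tpow W M) * D).trace := by
    rw [show tpow ρ M * (tpow W M * D * star (tpow W M))
        = (tpow ρ M * (tpow W M * D)) * star (tpow W M) by simp [Matrix.mul_assoc],
      Matrix.trace_mul_comm]
    congr 1
    simp [Matrix.mul_assoc]
  have e2 : star (tpow W M) * tpow ρ M * tpow W M = tpow σ M := by
    rw [Matrix.star_eq_conjTranspose, ← tpow_conjTranspose, ← tpow_mul, ← tpow_mul, hσ,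
      Matrix.star_eq_conjTranspose]
  rw [e1, e2, trace_mul_diag]
  -- termwise rewriting
  have e4 : ∀ i : Fin M → n, tpow σ M i i * ((flog (∏ m, ν (i m)) : ℝ) : ℂ)
      = ∑ m, (((flog (ν (i m)) : ℝ) : ℂ) * ∏ l, σ (i l) (i l)) := by
    intro i
    have htp : tpow σ M i i = ∏ l, σ (i l) (i l) := rfl
    by_cases hz : ∃ m, ν (i m) = 0
    · obtain ⟨m, hm⟩ := hz
      have hσ0 : σ (i m) (i m) = 0 := hzero _ hm
      have hprod : (∏ l, σ (i l) (i l)) = 0 :=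
        Finset.prod_eq_zero (Finset.mem_univ m) hσ0
      rw [htp, hprod]
      simp
    · push_neg at hz
      have hPne : (∏ m, ν (i m)) ≠ 0 := Finset.prod_ne_zero_iff.mpr (fun m _ => hz m)
      have hfl : flog (∏ m, ν (i m)) = ∑ m, flog (ν (i m)) := by
        rw [flog_of_ne hPne, Real.log_prod (fun m _ => hz m)]
        exact Finset.sum_congr rfl fun m _ => (flog_of_ne (hz m)).symm
      rw [htp, hfl, ← Finset.sum_mul]
      push_cast
      ring
  rw [Finset.sum_congr rfl (fun i _ => e4 i), Finset.sum_comm]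
  have key_m : ∀ m : Fin M,
      (∑ i : Fin M → n, ((flog (ν (i m)) : ℝ) : ℂ) * ∏ l, σ (i l) (i l))
        = ∑ x, ((flog (ν x) : ℝ) : ℂ) * σ x x := by
    intro m
    set F : Fin M → n → ℂ :=
      fun l x => if l = m then ((flog (ν x) : ℝ) : ℂ) * σ x x else σ x x with hF
    have hterm : ∀ i : Fin M → n, ((flog (ν (i m)) : ℝ) : ℂ) * ∏ l, σ (i l) (i l)
        = ∏ l, F l (i l) := by
      intro i
      rw [← Finset.mul_prod_erase Finset.univ (fun l => σ (i l) (i l)) (Finset.mem_univ m),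
        ← Finset.mul_prod_erase Finset.univ (fun l => F l (i l)) (Finset.mem_univ m)]
      have hers : ∀ l ∈ Finset.univ.erase m, F l (i l) = σ (i l) (i l) := by
        intro l hl
        rw [hF]
        simp only [if_neg (Finset.ne_of_mem_erase hl)]
      rw [Finset.prod_congr rfl hers, hF]
      simp only [if_pos rfl, if_true]
      ring
    rw [Finset.sum_congr rfl (fun i _ => hterm i), ← Fintype.piFinset_univ,
      ← Finset.prod_univ_sum,
      ← Finset.mul_prod_erase Finset.univ (fun l => ∑ x, F l x) (Finset.mem_univ m)]
    have hers : ∀ l ∈ Finset.univ.erase m, (∑ x, F l x) = 1 := by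
      intro l hl
      rw [hF]
      simp only [if_neg (Finset.ne_of_mem_erase hl)]
      exact hσtr
    rw [Finset.prod_congr rfl hers, Finset.prod_const_one, mul_one, hF]
    simp only [if_pos rfl, if_true]
  rw [Finset.sum_congr rfl (fun m _ => key_m m), Finset.sum_const, Finset.card_univ,
    Fintype.card_fin, nsmul_eq_mul]

end Aux2


section Aux3
open Matrix

lemma conj_decomp {n : Type*} [Fintype n] [DecidableEq n] {V : Matrix n n ℂ} (D : Matrix n n ℂ)
    (hV : V ∈ Matrix.unitaryGroup n ℂ) :
    star V * (V * D * star V) * V = D := by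
  rw [show star V * (V * D * star V) * V = (star V * V) * D * (star V * V) by
    simp [Matrix.mul_assoc]]
  rw [unit_star_mul hV]
  simp

lemma trace_mul_conj_diag {n : Type*} [Fintype n] [DecidableEq n]
    (ρ V : Matrix n n ℂ) (b : n → ℂ) :
    (ρ * (V * Matrix.diagonal b * star V)).trace = ∑ j, b j * (star V * ρ * V) j j := by
  rw [show ρ * (V * Matrix.diagonal b * star V) = (ρ * (V * Matrix.diagonal b)) * star V by
    simp [Matrix.mul_assoc], Matrix.trace_mul_comm]
  rw [show star V * (ρ * (V * Matrix.diagonal b)) = (star V * ρ * V) * Matrix.diagonal b by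
    simp [Matrix.mul_assoc], trace_mul_diag]
  exact Finset.sum_congr rfl fun j _ => mul_comm _ _

lemma sum_pull {J : Type*} [Fintype J] (a b : ℝ) (ha : a ≠ 0) (x : J → ℝ) (y : J → ℂ)
    (h0 : ∀ j, x j = 0 → y j = 0) (hsum : ∑ j, y j = 1) :
    ∑ j, ((flog (a * x j) : ℝ) : ℂ) * ((b : ℂ) * y j)
      = ((b * Real.log a : ℝ) : ℂ) + (b : ℂ) * ∑ j, ((flog (x j) : ℝ) : ℂ) * y j := by
  have hterm : ∀ j, ((flog (a * x j) : ℝ) : ℂ) * ((b : ℂ) * y j)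
      = ((b * Real.log a : ℝ) : ℂ) * y j + (b : ℂ) * (((flog (x j) : ℝ) : ℂ) * y j) := by
    intro j
    by_cases hx : x j = 0
    · simp [h0 j hx]
    · have hfl : flog (a * x j) = Real.log a + flog (x j) := by
        rw [flog_of_ne (mul_ne_zero ha hx), flog_of_ne hx, Real.log_mul ha hx]
      rw [hfl]
      push_cast
      ring
  rw [Finset.sum_congr rfl fun j _ => hterm j, Finset.sum_add_distrib, ← Finset.mul_sum,
    ← Finset.mul_sum, hsum, mul_one]

lemma fromBlocks_unitary {d : ℕ} {U : Matrix (Fin d) (Fin d) ℂ}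
    (hU : U ∈ Matrix.unitaryGroup (Fin d) ℂ) :
    Matrix.fromBlocks (1 : Matrix Unit Unit ℂ) 0 0 U ∈ Matrix.unitaryGroup (Unit ⊕ Fin d) ℂ := by
  rw [Matrix.mem_unitaryGroup_iff, Matrix.star_eq_conjTranspose, Matrix.fromBlocks_conjTranspose]
  rw [Matrix.fromBlocks_multiply]
  simp only [Matrix.conjTranspose_zero, Matrix.mul_zero, Matrix.zero_mul, add_zero,
    zero_add, Matrix.conjTranspose_one, Matrix.mul_one]
  rw [← Matrix.star_eq_conjTranspose, unit_mul_star hU]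
  exact Matrix.fromBlocks_one

lemma rareState_decomp {d : ℕ} {τ : Matrix (Fin d) (Fin d) ℂ} (hτ : τ.PosSemidef)
    (N : ℝ) (M : ℕ) :
    rareState N τ M =
      (Matrix.fromBlocks 1 0 0 (hτ.1.eigenvectorUnitary : Matrix (Fin d) (Fin d) ℂ)) *
      Matrix.diagonal (fun i : Unit ⊕ Fin d =>
        ((Sum.elim (fun _ : Unit => 1 - N / M) (fun j => N / M * hτ.1.eigenvalues j) i : ℝ) : ℂ)) *
      star (Matrix.fromBlocks 1 0 0 (hτ.1.eigenvectorUnitary : Matrix (Fin d) (Fin d) ℂ)) := by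
  set U := (hτ.1.eigenvectorUnitary : Matrix (Fin d) (Fin d) ℂ) with hU
  have hsp : τ = U * Matrix.diagonal (fun j => ((hτ.1.eigenvalues j : ℝ) : ℂ)) * star U := by
    simpa [Function.comp_def] using hτ.1.spectral_theorem
  have hdiag : Matrix.diagonal (fun i : Unit ⊕ Fin d =>
        ((Sum.elim (fun _ : Unit => 1 - N / M) (fun j => N / M * hτ.1.eigenvalues j) i : ℝ) : ℂ))
      = Matrix.fromBlocks (Matrix.diagonal fun _ : Unit => ((1 - N / M : ℝ) : ℂ)) 0 0
          (Matrix.diagonal fun j => ((N / M * hτ.1.eigenvalues j : ℝ) : ℂ)) := by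
    rw [Matrix.fromBlocks_diagonal]
    congr 1
    funext i
    cases i <;> rfl
  rw [hdiag, Matrix.star_eq_conjTranspose, Matrix.fromBlocks_conjTranspose,
    Matrix.fromBlocks_multiply, Matrix.fromBlocks_multiply]
  simp only [Matrix.conjTranspose_zero, Matrix.mul_zero, Matrix.zero_mul, add_zero,
    zero_add, Matrix.conjTranspose_one, Matrix.mul_one, Matrix.one_mul]
  have h2 : (Matrix.diagonal fun j => ((N / M * hτ.1.eigenvalues j : ℝ) : ℂ))
      = ((N / M : ℝ) : ℂ) • Matrix.diagonal (fun j => ((hτ.1.eigenvalues j : ℝ) : ℂ)) := by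
    ext i j
    by_cases h : i = j
    · subst h
      simp
    · simp [Matrix.diagonal_apply_ne _ h]
  have hbr : ((N / M : ℝ) : ℂ) • τ
      = (U * Matrix.diagonal fun j => ((N / M * hτ.1.eigenvalues j : ℝ) : ℂ)) * Uᴴ := by
    rw [h2, Matrix.mul_smul, Matrix.smul_mul, ← Matrix.star_eq_conjTranspose, ← hsp]
  rw [rareState, Matrix.smul_one_eq_diagonal, hbr]

end Aux3

/-- The relative entropy between two Poisson states in the Poisson limit is
`D(Γ‖Γ') = N' − N + tr Γ (ln Γ − ln Γ')` with `Γ = N τ₁`, `Γ' = N' τ₁'`. -/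
theorem poisson_states_relEnt {d : ℕ} (τ₁ τ₁' : Matrix (Fin d) (Fin d) ℂ)
    (hτ₁ : τ₁.PosSemidef) (hτ₁tr : τ₁.trace = 1)
    (hτ₁' : τ₁'.PosSemidef) (hτ₁'tr : τ₁'.trace = 1)
    (hsupp : ∀ v : Fin d → ℂ, τ₁'.mulVec v = 0 → τ₁.mulVec v = 0)
    (N N' : ℝ) (hN : 0 < N) (hN' : 0 < N') :
    Filter.Tendsto
      (fun M : ℕ => qRelEnt (tpow (rareState N τ₁ M) M) (tpow (rareState N' τ₁' M) M))
      Filter.atTop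
      (nhds (N' - N + qRelEnt ((N : ℂ) • τ₁) ((N' : ℂ) • τ₁'))) := by
  classical
  set U : Matrix (Fin d) (Fin d) ℂ := (hτ₁.1.eigenvectorUnitary : Matrix (Fin d) (Fin d) ℂ)
    with hUdef
  set U' : Matrix (Fin d) (Fin d) ℂ := (hτ₁'.1.eigenvectorUnitary : Matrix (Fin d) (Fin d) ℂ)
    with hU'def
  set lam : Fin d → ℝ := hτ₁.1.eigenvalues with hlamdef
  set lam' : Fin d → ℝ := hτ₁'.1.eigenvalues with hlam'def
  have hUm : U ∈ Matrix.unitaryGroup (Fin d) ℂ := hτ₁.1.eigenvectorUnitary.prop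
  have hU'm : U' ∈ Matrix.unitaryGroup (Fin d) ℂ := hτ₁'.1.eigenvectorUnitary.prop
  have hlam0 : ∀ j, 0 ≤ lam j := hτ₁.eigenvalues_nonneg
  have hlam'0 : ∀ j, 0 ≤ lam' j := hτ₁'.eigenvalues_nonneg
  have hsp : τ₁ = U * Matrix.diagonal (fun j => ((lam j : ℝ) : ℂ)) * star U := by
    simpa [Function.comp_def] using hτ₁.1.spectral_theorem
  have hsp' : τ₁' = U' * Matrix.diagonal (fun j => ((lam' j : ℝ) : ℂ)) * star U' := by
    simpa [Function.comp_def] using hτ₁'.1.spectral_theorem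
  set c : Fin d → ℂ := fun j => (star U' * τ₁ * U') j j with hcdef
  have hdiagU : star U * τ₁ * U = Matrix.diagonal (fun j => ((lam j : ℝ) : ℂ)) := by
    conv_lhs => rw [hsp]
    exact conj_decomp _ hUm
  have hsumlam : ∑ j, lam j = 1 := by
    have h1 : (Matrix.diagonal (fun j => ((lam j : ℝ) : ℂ))).trace = τ₁.trace := by
      rw [← hdiagU, Matrix.trace_mul_cycle, unit_mul_star hUm, Matrix.one_mul]
    rw [hτ₁tr, Matrix.trace_diagonal] at h1
    exact_mod_cast h1
  have hsumc : ∑ j, c j = 1 := by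
    have h1 : (star U' * τ₁ * U').trace = τ₁.trace := by
      rw [Matrix.trace_mul_cycle, unit_mul_star hU'm, Matrix.one_mul]
    rw [hτ₁tr] at h1
    simpa [Matrix.trace, Matrix.diag, hcdef] using h1
  have hczero : ∀ j, lam' j = 0 → c j = 0 := by
    intro j hj
    have hUc : τ₁' * U' = U' * Matrix.diagonal (fun j => ((lam' j : ℝ) : ℂ)) := by
      conv_lhs => rw [hsp']
      rw [Matrix.mul_assoc, Matrix.mul_assoc, unit_star_mul hU'm, Matrix.mul_one]
    have hcol : τ₁'.mulVec (fun i => U' i j) = 0 := by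
      funext i
      have h2 := congrFun (congrFun hUc i) j
      rw [Matrix.mul_apply, Matrix.mul_diagonal] at h2
      simpa [Matrix.mulVec, dotProduct, hj] using h2
    have h0 : τ₁.mulVec (fun i => U' i j) = 0 := hsupp _ hcol
    have hzer : ∀ i, (τ₁ * U') i j = 0 := by
      intro i
      have := congrFun h0 i
      simpa [Matrix.mulVec, dotProduct, Matrix.mul_apply] using this
    have hcj : c j = ∑ i, (star U') j i * (τ₁ * U') i j := by
      rw [hcdef]
      simp only [Matrix.mul_assoc]
      rw [Matrix.mul_apply]
    simp [hcj, hzer]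
  set S : ℝ := ∑ j, flog (lam j) * lam j with hSdef
  set z : ℂ := ∑ j, ((flog (lam' j) : ℝ) : ℂ) * c j with hzdef
  set CC : ℝ := N * Real.log N + N * S - N * Real.log N' - N * z.re with hCdef
  have hScast : ∑ j, ((flog (lam j) : ℝ) : ℂ) * ((lam j : ℝ) : ℂ) = ((S : ℝ) : ℂ) := by
    rw [hSdef]
    push_cast
    rfl
  -- the constant term
  have hconst : qRelEnt ((N : ℂ) • τ₁) ((N' : ℂ) • τ₁') = CC := by
    have hd1 : Matrix.diagonal (fun j => ((N * lam j : ℝ) : ℂ))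
        = (N : ℂ) • Matrix.diagonal (fun j => ((lam j : ℝ) : ℂ)) := by
      ext i j'
      by_cases h : i = j'
      · subst h; simp
      · simp [Matrix.diagonal_apply_ne _ h]
    have hd2 : Matrix.diagonal (fun j => ((N' * lam' j : ℝ) : ℂ))
        = (N' : ℂ) • Matrix.diagonal (fun j => ((lam' j : ℝ) : ℂ)) := by
      ext i j'
      by_cases h : i = j'
      · subst h; simp
      · simp [Matrix.diagonal_apply_ne _ h]
    have hdec1 : (N : ℂ) • τ₁ = U * Matrix.diagonal (fun j => ((N * lam j : ℝ) : ℂ)) * star U := by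
      rw [hd1, Matrix.mul_smul, Matrix.smul_mul, ← hsp]
    have hdec2 : (N' : ℂ) • τ₁'
        = U' * Matrix.diagonal (fun j => ((N' * lam' j : ℝ) : ℂ)) * star U' := by
      rw [hd2, Matrix.mul_smul, Matrix.smul_mul, ← hsp']
    have hP1 : ((N : ℂ) • τ₁).PosSemidef :=
      posSemidef_of_decomp hUm (fun j => mul_nonneg hN.le (hlam0 j)) hdec1
    have hP2 : ((N' : ℂ) • τ₁').PosSemidef :=
      posSemidef_of_decomp hU'm (fun j => mul_nonneg hN'.le (hlam'0 j)) hdec2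
    have hL1 := matLog_eq hP1 hUm _ hdec1
    have hL2 := matLog_eq hP2 hU'm _ hdec2
    rw [qRelEnt, hL1, hL2, Matrix.mul_sub, Matrix.trace_sub, trace_mul_conj_diag,
      trace_mul_conj_diag]
    have hA1 : ∀ j, (star U * ((N : ℂ) • τ₁) * U) j j = (N : ℂ) * ((lam j : ℝ) : ℂ) := by
      intro j
      rw [Matrix.mul_smul, Matrix.smul_mul, hdiagU]
      simp
    have hA2 : ∀ j, (star U' * ((N : ℂ) • τ₁) * U') j j = (N : ℂ) * c j := by
      intro j
      rw [Matrix.mul_smul, Matrix.smul_mul]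
      simp [hcdef]
    have hs1 : ∑ j, ((flog (N * lam j) : ℝ) : ℂ) * (star U * ((N : ℂ) • τ₁) * U) j j
        = ((N * Real.log N : ℝ) : ℂ) + (N : ℂ) * ((S : ℝ) : ℂ) := by
      rw [Finset.sum_congr rfl fun j _ => by rw [hA1 j]]
      rw [sum_pull N N hN.ne' lam (fun j => ((lam j : ℝ) : ℂ))
        (fun j hj => by show ((lam j : ℝ) : ℂ) = 0; rw [hj]; norm_num)
        (by exact_mod_cast hsumlam), hScast]
    have hs2 : ∑ j, ((flog (N' * lam' j) : ℝ) : ℂ) * (star U' * ((N : ℂ) • τ₁) * U') j j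
        = ((N * Real.log N' : ℝ) : ℂ) + (N : ℂ) * z := by
      rw [Finset.sum_congr rfl fun j _ => by rw [hA2 j]]
      rw [sum_pull N' N hN'.ne' lam' c hczero hsumc, hzdef]
    rw [hs1, hs2, hCdef]
    simp only [Complex.sub_re, Complex.add_re, Complex.ofReal_re, Complex.re_ofReal_mul]
    ring
  -- the main formula for large M
  have hmain : ∀ M : ℕ, N < (M : ℝ) → N' < (M : ℝ) →
      qRelEnt (tpow (rareState N τ₁ M) M) (tpow (rareState N' τ₁' M) M)
        = (1 - N / M) * ((M : ℝ) * Real.log (1 - N / M) - (M : ℝ) * Real.log (1 - N' / M))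
          + CC := by
    intro M hMN hMN'
    have hM0 : (0 : ℝ) < M := lt_trans hN hMN
    set ν : Unit ⊕ Fin d → ℝ :=
      Sum.elim (fun _ => 1 - N / M) (fun j => N / M * lam j) with hνdef
    set ν' : Unit ⊕ Fin d → ℝ :=
      Sum.elim (fun _ => 1 - N' / M) (fun j => N' / M * lam' j) with hν'def
    set W : Matrix (Unit ⊕ Fin d) (Unit ⊕ Fin d) ℂ := Matrix.fromBlocks 1 0 0 U with hWdef
    set W' : Matrix (Unit ⊕ Fin d) (Unit ⊕ Fin d) ℂ := Matrix.fromBlocks 1 0 0 U' with hW'def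
    have hWm : W ∈ Matrix.unitaryGroup (Unit ⊕ Fin d) ℂ := fromBlocks_unitary hUm
    have hW'm : W' ∈ Matrix.unitaryGroup (Unit ⊕ Fin d) ℂ := fromBlocks_unitary hU'm
    have hNM0 : (0 : ℝ) < N / M := div_pos hN hM0
    have hN'M0 : (0 : ℝ) < N' / M := div_pos hN' hM0
    have h1NM : (0 : ℝ) < 1 - N / M := by
      rw [sub_pos]
      exact (div_lt_one hM0).mpr hMN
    have h1N'M : (0 : ℝ) < 1 - N' / M := by
      rw [sub_pos]
      exact (div_lt_one hM0).mpr hMN'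
    have hν0 : ∀ x, 0 ≤ ν x := by
      intro x
      cases x with
      | inl _ => exact h1NM.le
      | inr j => exact mul_nonneg hNM0.le (hlam0 j)
    have hν'0 : ∀ x, 0 ≤ ν' x := by
      intro x
      cases x with
      | inl _ => exact h1N'M.le
      | inr j => exact mul_nonneg hN'M0.le (hlam'0 j)
    have hρdec : rareState N τ₁ M = W * Matrix.diagonal (fun i => ((ν i : ℝ) : ℂ)) * star W :=
      rareState_decomp hτ₁ N M
    have hρ'dec : rareState N' τ₁' M
        = W' * Matrix.diagonal (fun i => ((ν' i : ℝ) : ℂ)) * star W' :=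
      rareState_decomp hτ₁' N' M
    have htrB : ∀ (A : Matrix Unit Unit ℂ) (D : Matrix (Fin d) (Fin d) ℂ),
        (Matrix.fromBlocks A 0 0 D).trace = A.trace + D.trace := by
      intro A D
      simp [Matrix.trace, Matrix.diag, Fintype.sum_sum_type, Matrix.fromBlocks]
    have hρtr : (rareState N τ₁ M).trace = 1 := by
      rw [rareState, htrB, Matrix.trace_smul, Matrix.trace_smul, hτ₁tr, Matrix.trace_one]
      push_cast
      have : (M : ℂ) ≠ 0 := by
        exact_mod_cast (show (M:ℝ) ≠ 0 from hM0.ne')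
      field_simp
      simp only [Fintype.card_unit, Nat.cast_one, smul_eq_mul, mul_one]
      rw [← add_div, sub_add_cancel, div_self this]
    have htdec : tpow (rareState N τ₁ M) M
        = tpow W M * Matrix.diagonal
            (fun i : Fin M → Unit ⊕ Fin d => ((∏ m, ν (i m) : ℝ) : ℂ)) * star (tpow W M) := by
      rw [hρdec, tpow_mul, tpow_mul, tpow_diagonal, Matrix.star_eq_conjTranspose,
        tpow_conjTranspose, ← Matrix.star_eq_conjTranspose]
      congr 2
      funext i
      push_cast
      rfl
    have htdec' : tpow (rareState N' τ₁' M) M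
        = tpow W' M * Matrix.diagonal
            (fun i : Fin M → Unit ⊕ Fin d => ((∏ m, ν' (i m) : ℝ) : ℂ)) * star (tpow W' M) := by
      rw [hρ'dec, tpow_mul, tpow_mul, tpow_diagonal, Matrix.star_eq_conjTranspose,
        tpow_conjTranspose, ← Matrix.star_eq_conjTranspose]
      congr 2
      funext i
      push_cast
      rfl
    have hPt : (tpow (rareState N τ₁ M) M).PosSemidef :=
      posSemidef_of_decomp (tpow_unitary hWm M)
        (fun i => Finset.prod_nonneg fun m _ => hν0 (i m)) htdec
    have hPt' : (tpow (rareState N' τ₁' M) M).PosSemidef :=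
      posSemidef_of_decomp (tpow_unitary hW'm M)
        (fun i => Finset.prod_nonneg fun m _ => hν'0 (i m)) htdec'
    have hLt1 : matLog (tpow (rareState N τ₁ M) M)
        = tpow W M * Matrix.diagonal
            (fun i : Fin M → Unit ⊕ Fin d => ((flog (∏ m, ν (i m)) : ℝ) : ℂ))
          * star (tpow W M) :=
      matLog_eq hPt (tpow_unitary hWm M) (fun i => ∏ m, ν (i m)) htdec
    have hLt2 : matLog (tpow (rareState N' τ₁' M) M)
        = tpow W' M * Matrix.diagonal
            (fun i : Fin M → Unit ⊕ Fin d => ((flog (∏ m, ν' (i m)) : ℝ) : ℂ))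
          * star (tpow W' M) :=
      matLog_eq hPt' (tpow_unitary hW'm M) (fun i => ∏ m, ν' (i m)) htdec'
    have hσ1 : star W * rareState N τ₁ M * W = Matrix.diagonal (fun i => ((ν i : ℝ) : ℂ)) := by
      conv_lhs => rw [hρdec]
      exact conj_decomp _ hWm
    have hσ2 : star W' * rareState N τ₁ M * W'
        = Matrix.fromBlocks (((1 - N / M : ℝ) : ℂ) • 1) 0 0
            (((N / M : ℝ) : ℂ) • (star U' * τ₁ * U')) := by
      rw [rareState, hW'def, Matrix.star_eq_conjTranspose, Matrix.fromBlocks_conjTranspose,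
        Matrix.fromBlocks_multiply, Matrix.fromBlocks_multiply]
      simp only [Matrix.conjTranspose_zero, Matrix.mul_zero, Matrix.zero_mul, add_zero,
        zero_add, Matrix.conjTranspose_one, Matrix.mul_one, Matrix.one_mul]
      rw [Matrix.mul_smul, Matrix.smul_mul, ← Matrix.star_eq_conjTranspose]
    have hz1 : ∀ x, ν x = 0 → (star W * rareState N τ₁ M * W) x x = 0 := by
      intro x hx
      rw [hσ1]
      have : (Matrix.diagonal (fun i => ((ν i : ℝ) : ℂ))) x x = ((ν x : ℝ) : ℂ) :=
        Matrix.diagonal_apply_eq _ x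
      rw [this, hx]
      norm_num
    have hz2 : ∀ x, ν' x = 0 → (star W' * rareState N τ₁ M * W') x x = 0 := by
      intro x hx
      cases x with
      | inl u =>
          exfalso
          have : ν' (Sum.inl u) = 1 - N' / M := rfl
          rw [this] at hx
          exact h1N'M.ne' hx
      | inr j =>
          have hl' : lam' j = 0 := by
            have : ν' (Sum.inr j) = N' / M * lam' j := rfl
            rw [this] at hx
            rcases mul_eq_zero.mp hx with h | h
            · exact absurd h hN'M0.ne'
            · exact h
          rw [hσ2]
          have : (Matrix.fromBlocks (((1 - N / M : ℝ) : ℂ) • (1 : Matrix Unit Unit ℂ)) 0 0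
              (((N / M : ℝ) : ℂ) • (star U' * τ₁ * U'))) (Sum.inr j) (Sum.inr j)
              = ((N / M : ℝ) : ℂ) * c j := by
            rw [Matrix.fromBlocks_apply₂₂, Matrix.smul_apply, smul_eq_mul]
          rw [this, hczero j hl']
          norm_num
    have hT1 := trace_tpow_mul_log (rareState N τ₁ M) W hWm ν hρtr hz1 M
    have hT2 := trace_tpow_mul_log (rareState N τ₁ M) W' hW'm ν' hρtr hz2 M
    -- evaluate the two sums
    have hv1 : ∑ x : Unit ⊕ Fin d, ((flog (ν x) : ℝ) : ℂ) * (star W * rareState N τ₁ M * W) x x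
        = ((flog (1 - N / M) * (1 - N / M) : ℝ) : ℂ)
          + (((N / M) * Real.log (N / M) : ℝ) : ℂ) + ((N / M : ℝ) : ℂ) * ((S : ℝ) : ℂ) := by
      rw [hσ1, Fintype.sum_sum_type]
      simp only [Matrix.diagonal_apply_eq, hνdef, Sum.elim_inl, Sum.elim_inr,
        Finset.univ_unique, Finset.sum_singleton]
      have hy : ∀ j : Fin d, ((N / M * lam j : ℝ) : ℂ)
          = ((N / M : ℝ) : ℂ) * ((lam j : ℝ) : ℂ) := by
        intro j
        push_cast
        ring
      rw [Finset.sum_congr rfl fun j _ => by rw [hy j]]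
      rw [sum_pull (N / M) (N / M) hNM0.ne' lam (fun j => ((lam j : ℝ) : ℂ))
        (fun j hj => by show ((lam j : ℝ) : ℂ) = 0; rw [hj]; norm_num)
        (by exact_mod_cast hsumlam), hScast]
      push_cast
      ring
    have hv2 : ∑ x : Unit ⊕ Fin d, ((flog (ν' x) : ℝ) : ℂ) * (star W' * rareState N τ₁ M * W') x x
        = ((flog (1 - N' / M) * (1 - N / M) : ℝ) : ℂ)
          + (((N / M) * Real.log (N' / M) : ℝ) : ℂ) + ((N / M : ℝ) : ℂ) * z := by
      rw [hσ2, Fintype.sum_sum_type]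
      have hbl : ∀ u : Unit, (Matrix.fromBlocks (((1 - N / M : ℝ) : ℂ) • (1 : Matrix Unit Unit ℂ)) 0 0
          (((N / M : ℝ) : ℂ) • (star U' * τ₁ * U'))) (Sum.inl u) (Sum.inl u)
          = ((1 - N / M : ℝ) : ℂ) := by
        intro u
        rw [Matrix.fromBlocks_apply₁₁, Matrix.smul_apply, Matrix.one_apply_eq, smul_eq_mul,
          mul_one]
      have hbr : ∀ j : Fin d, (Matrix.fromBlocks (((1 - N / M : ℝ) : ℂ) • (1 : Matrix Unit Unit ℂ)) 0 0
          (((N / M : ℝ) : ℂ) • (star U' * τ₁ * U'))) (Sum.inr j) (Sum.inr j)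
          = ((N / M : ℝ) : ℂ) * c j := by
        intro j
        rw [Matrix.fromBlocks_apply₂₂, Matrix.smul_apply, smul_eq_mul]
      rw [Finset.sum_congr rfl fun (u : Unit) _ => by rw [hbl u]]
      rw [Finset.sum_congr rfl fun (j : Fin d) _ => by rw [hbr j]]
      simp only [hν'def, Sum.elim_inl, Sum.elim_inr, Finset.univ_unique, Finset.sum_singleton]
      rw [sum_pull (N' / M) (N / M) hN'M0.ne' lam' c hczero hsumc, hzdef]
      push_cast
      ring
    -- assemble
    rw [qRelEnt, hLt1, hLt2, Matrix.mul_sub, Matrix.trace_sub, hT1, hT2, hv1, hv2]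
    have hMC : (M : ℂ) = ((M : ℝ) : ℂ) := by push_cast; rfl
    rw [hMC]
    simp only [Complex.sub_re, Complex.add_re, Complex.mul_re, Complex.ofReal_re,
      Complex.ofReal_im, Complex.re_ofReal_mul, Complex.add_im, Complex.ofReal_im]
    have hflog1 : flog (1 - N / M) = Real.log (1 - N / M) := flog_of_ne h1NM.ne'
    have hflog2 : flog (1 - N' / M) = Real.log (1 - N' / M) := flog_of_ne h1N'M.ne'
    have hlogNM : Real.log (N / M) = Real.log N - Real.log M := Real.log_div hN.ne' hM0.ne'
    have hlogN'M : Real.log (N' / M) = Real.log N' - Real.log M := Real.log_div hN'.ne' hM0.ne'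
    rw [hflog1, hflog2, hlogNM, hlogN'M, hCdef]
    field_simp
    ring
  -- the limit
  have hlim1 : Filter.Tendsto (fun M : ℕ => (M : ℝ) * Real.log (1 - N / M))
      Filter.atTop (nhds (-N)) := by
    have h := (Real.tendsto_mul_log_one_add_div_atTop (-N)).comp
      (tendsto_natCast_atTop_atTop (R := ℝ))
    simpa [Function.comp_def, sub_eq_add_neg, neg_div] using h
  have hlim2 : Filter.Tendsto (fun M : ℕ => (M : ℝ) * Real.log (1 - N' / M))
      Filter.atTop (nhds (-N')) := by
    have h := (Real.tendsto_mul_log_one_add_div_atTop (-N')).comp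
      (tendsto_natCast_atTop_atTop (R := ℝ))
    simpa [Function.comp_def, sub_eq_add_neg, neg_div] using h
  have hdiv : Filter.Tendsto (fun M : ℕ => 1 - N / (M : ℝ)) Filter.atTop (nhds 1) := by
    have h := tendsto_const_div_atTop_nhds_zero_nat N
    have h2 := Filter.Tendsto.sub (tendsto_const_nhds (x := (1 : ℝ))) h
    simpa using h2
  have hfin : Filter.Tendsto (fun M : ℕ => (1 - N / (M : ℝ))
        * ((M : ℝ) * Real.log (1 - N / M) - (M : ℝ) * Real.log (1 - N' / M)) + CC)
      Filter.atTop (nhds (N' - N + CC)) := by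
    have h := Filter.Tendsto.add (Filter.Tendsto.mul hdiv (Filter.Tendsto.sub hlim1 hlim2))
      (tendsto_const_nhds (x := CC))
    have : 1 * (-N - -N') + CC = N' - N + CC := by ring
    rwa [this] at h
  rw [hconst]
  refine hfin.congr' ?_
  rw [Filter.EventuallyEq, Filter.eventually_atTop]
  refine ⟨⌊max N N'⌋₊ + 1, fun M hM => ?_⟩
  have hmaxM : max N N' < (M : ℝ) := by
    have h1 : max N N' < ((⌊max N N'⌋₊ + 1 : ℕ) : ℝ) := by
      push_cast
      exact Nat.lt_floor_add_one _
    exact lt_of_lt_of_le h1 (by exact_mod_cast hM)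
  exact (hmain M (lt_of_le_of_lt (le_max_left N N') hmaxM)
    (lt_of_le_of_lt (le_max_right N N') hmaxM)).symm
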